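/- arXiv:1906.04325 — 2 statements merged into one kernel-verified Lean document; each statement's English description precedes it below -/
import Mathlib

section
/- Every directed multigraph G can be edge-decomposed into k spanning subgraphs G_1, …, G_k such that for each vertex v and each i, |d⁺_{G_i}(v) − d⁺_G(v)/k| < 1 and |d⁻_{G_i}(v) − d⁻_G(v)/k| < 1, and moreover for every vertex u with d⁺_G(u) ≡ d⁻_G(u) (mod k), each d_{G_i}(u) has the same parity as (d⁺_G(u) − d⁻_G(u))/k. -/
/-!
Encode `G` as a bipartite multigraph in which a vertex `v` has a copy `v⁺` on the left, incident
with its out-arcs, and a copy `v⁻` on the right, incident with its in-arcs. Once every degree is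
a multiple of `k`, the edges can be `k`-coloured so that each colour class takes exactly a `1/k`
share of the edges at every vertex: cut each vertex into blocks of `k` edges and peel off
perfect matchings of the resulting `k`-regular multigraph, found with Hall's theorem. The
colour classes restricted to the arcs of `G` are the factors `G_i`.

To make the degrees divisible by `k`, join `v⁺` to a new right vertex `w_v` by the `n⁺ < k`
dummy edges that complete `d⁺(v)`, and `v⁻` to a new left vertex `w'_v` by `n⁻ < k` dummy
edges. Both `w_v` and `w'_v` end up with degree `< 2k`, so each factor takes at most one dummy
edge at `v⁺`, which gives `|d⁺_{G_i}(v) - d⁺_G(v)/k| < 1`, and likewise at `v⁻`. If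
`d⁺(v) ≡ d⁻(v) (mod k)` then `n⁺ = n⁻`, and `w_v`, `w'_v` are completed by the same edges
joining them; so each factor takes as many dummy edges at `v⁺` as at `v⁻`, whence
`d⁺_{G_i}(v) - d⁻_{G_i}(v) = (d⁺_G(v) - d⁻_G(v))/k`, which has the parity of `d_{G_i}(v)`.
Otherwise `w_v` and `w'_v` are completed through a sink on either side; the degrees of the
sinks work out because both sides of the multigraph have the same total degree.
-/

open Finset

variable {V E : Type*}

/-- Out-degree of `v` in the sub-digraph given by arc set `S`; `ends e = (tail, head)`. -/
def outdeg [DecidableEq V] (ends : E → V × V) (S : Finset E) (v : V) : ℕ :=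
  (S.filter fun e => (ends e).1 = v).card

/-- In-degree of `v` in the sub-digraph given by arc set `S`. -/
def indeg [DecidableEq V] (ends : E → V × V) (S : Finset E) (v : V) : ℕ :=
  (S.filter fun e => (ends e).2 = v).card

section ExactColoring

/- A bipartite multigraph is an edge type `A` with end maps `l : A → X` and `r : A → Y`;
`#{b | l b = l a} = k` says that the vertex `l a` has degree `k`. -/

variable {A X Y : Type*} [Fintype A] [DecidableEq X] [DecidableEq Y]

theorem card_filter_subtype (p : A → Prop) [DecidablePred p] (P : {a // p a} → Prop)
    [DecidablePred P] : #{b | P b} = #{a | ∃ h : p a, P ⟨a, h⟩} := by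
  rw [← card_map (Function.Embedding.subtype p)]
  congr 1; ext a; simp

theorem card_filter_mem_eq_mul {k : ℕ} (f : A → X) (hf : ∀ a, #{b | f b = f a} = k)
    (t : Finset X) (ht : ∀ x ∈ t, ∃ a, f a = x) : #{a | f a ∈ t} = k * #t := by
  rw [card_eq_sum_card_fiberwise (f := f) (t := t) fun a ha => by simpa using ha,
    mul_comm, ← smul_eq_mul, ← sum_const]
  refine sum_congr rfl fun x hx => ?_
  obtain ⟨a, rfl⟩ := ht x hx
  rw [← hf a, filter_filter]
  congr 1; ext b
  simp only [mem_filter, mem_univ, true_and, and_iff_right_iff_imp]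
  exact fun h => h ▸ hx

theorem card_le_card_biUnion_of_fiber_card {k : ℕ} (hk : 0 < k) (l : A → X) (r : A → Y)
    (hl : ∀ a, #{b | l b = l a} = k) (hr : ∀ a, #{b | r b = r a} = k) (s : Finset X)
    (hs : ∀ x ∈ s, ∃ a, l a = x) :
    #s ≤ #(s.biUnion fun x => ({a | l a = x} : Finset A).image r) := by
  refine Nat.le_of_mul_le_mul_left ?_ hk
  rw [← card_filter_mem_eq_mul l hl s hs, ← card_filter_mem_eq_mul r hr _ fun y hy => ?_]
  · refine card_le_card fun a ha => ?_
    simp only [mem_filter, mem_univ, true_and, mem_biUnion, mem_image] at ha ⊢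
    exact ⟨l a, ha, a, rfl, rfl⟩
  · simp only [mem_biUnion, mem_image, mem_filter, mem_univ, true_and] at hy
    obtain ⟨x, -, a, -, rfl⟩ := hy
    exact ⟨a, rfl⟩

theorem card_image_eq_of_fiber_card {k : ℕ} (hk : 0 < k) (l : A → X) (r : A → Y)
    (hl : ∀ a, #{b | l b = l a} = k) (hr : ∀ a, #{b | r b = r a} = k) :
    #(univ.image l) = #(univ.image r) := by
  refine Nat.eq_of_mul_eq_mul_left hk ?_
  rw [← card_filter_mem_eq_mul l hl _ fun x hx => by simpa using hx,
    ← card_filter_mem_eq_mul r hr _ fun y hy => by simpa using hy]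
  simp

theorem exists_section_injective_of_fiber_card {k : ℕ} (hk : 0 < k) (l : A → X) (r : A → Y)
    (hl : ∀ a, #{b | l b = l a} = k) (hr : ∀ a, #{b | r b = r a} = k) :
    ∃ g : univ.image l → A, (∀ x, l (g x) = x) ∧ Function.Injective (r ∘ g) := by
  classical
  obtain ⟨f, hf_inj, hf⟩ := (all_card_le_biUnion_card_iff_exists_injective
    fun x : univ.image l => ({a | l a = x.1} : Finset A).image r).1 fun s => by
      have := card_le_card_biUnion_of_fiber_card hk l r hl hr (s.image Subtype.val)
        fun x hx => by obtain ⟨⟨x, hxl⟩, -, rfl⟩ := mem_image.1 hx; simpa using hxl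
      rwa [card_image_of_injective _ Subtype.val_injective, image_biUnion] at this
  have hg : ∀ x : univ.image l, ∃ a, l a = x.1 ∧ r a = f x := fun x => by simpa using hf x
  choose g hgl hgr using hg
  exact ⟨g, hgl, fun x y h => hf_inj (by simpa [hgr] using h)⟩

theorem exists_matching_of_fiber_card {k : ℕ} (hk : 0 < k) (l : A → X) (r : A → Y)
    (hl : ∀ a, #{b | l b = l a} = k) (hr : ∀ a, #{b | r b = r a} = k) :
    ∃ M : Finset A, (∀ a, #{b ∈ M | l b = l a} = 1) ∧
      ∀ a, #{b ∈ M | r b = r a} = 1 := by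
  classical
  obtain ⟨g, hgl, hg_inj⟩ := exists_section_injective_of_fiber_card hk l r hl hr
  have hg_surj : ∀ a, ∃ x, r (g x) = r a := by
    have hmaps (x : univ.image l) : r (g x) ∈ univ.image r := mem_image_of_mem r (mem_univ _)
    have hbij : Function.Bijective fun x => (⟨r (g x), hmaps x⟩ : univ.image r) := by
      refine (Fintype.bijective_iff_injective_and_card _).2 ⟨fun x y h => hg_inj ?_, ?_⟩
      · simpa using h
      · simpa using card_image_eq_of_fiber_card hk l r hl hr
    intro a
    obtain ⟨x, hx⟩ := hbij.2 ⟨r a, mem_image_of_mem r (mem_univ a)⟩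
    exact ⟨x, congrArg Subtype.val hx⟩
  refine ⟨univ.image g,
    fun a => card_eq_one.2 ⟨g ⟨l a, mem_image_of_mem l (mem_univ a)⟩, ?_⟩, fun a => ?_⟩
  · ext b
    simp only [mem_filter, mem_image, mem_univ, true_and, mem_singleton]
    constructor
    · rintro ⟨⟨x, rfl⟩, hx⟩
      congr 1; exact Subtype.ext ((hgl x).symm.trans hx)
    · rintro rfl; exact ⟨⟨_, rfl⟩, hgl _⟩
  · obtain ⟨x, hx⟩ := hg_surj a
    refine card_eq_one.2 ⟨g x, ?_⟩
    ext b
    simp only [mem_filter, mem_image, mem_univ, true_and, mem_singleton]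
    constructor
    · rintro ⟨⟨y, rfl⟩, hy⟩
      congr 1; exact hg_inj (hy.trans hx.symm)
    · rintro rfl; exact ⟨⟨x, rfl⟩, hx⟩

theorem card_filter_notMem_and_eq [DecidableEq A] {k : ℕ} (f : A → X)
    (hf : ∀ a, #{b | f b = f a} = k + 1) {M : Finset A} (hM : ∀ a, #{b ∈ M | f b = f a} = 1)
    (a : A) : #{b | b ∉ M ∧ f b = f a} = k := by
  have hM' : #{b | f b = f a ∧ b ∈ M} = 1 := by
    rw [← hM a]; congr 1; ext; simp [and_comm]
  have := card_filter_add_card_filter_not (s := {b | f b = f a}) (· ∈ M)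
  rw [filter_filter, filter_filter, hf, hM'] at this
  simp only [and_comm (a := _ ∉ M)]
  omega

def extendLast [DecidableEq A] {k : ℕ} (M : Finset A) (c : {a // a ∉ M} → Fin k) (a : A) :
    Fin (k + 1) :=
  if h : a ∈ M then Fin.last k else (c ⟨a, h⟩).castSucc

theorem card_filter_extendLast [DecidableEq A] {k : ℕ} (f : A → X)
    (hf : ∀ a, #{b | f b = f a} = k + 1) {M : Finset A} (hM : ∀ a, #{b ∈ M | f b = f a} = 1)
    (c : {a // a ∉ M} → Fin k)
    (hc : ∀ (a : {a // a ∉ M}) i, #{b | f b.1 = f a.1 ∧ c b = i} = 1)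
    (a : A) (i : Fin (k + 1)) : #{b | f b = f a ∧ extendLast M c b = i} = 1 := by
  rcases Fin.eq_castSucc_or_eq_last i with ⟨j, rfl⟩ | rfl
  · obtain ⟨a', ha'⟩ : ∃ a', f a' = f a ∧ a' ∉ M := by
      have := card_filter_notMem_and_eq f hf hM a
      have := j.pos
      obtain ⟨a', ha'⟩ := card_pos.1 (by omega : 0 < #{b | b ∉ M ∧ f b = f a})
      exact ⟨a', by simpa [and_comm] using ha'⟩
    refine Eq.trans ?_ (hc ⟨a', ha'.2⟩ j)
    rw [card_filter_subtype]
    refine congrArg card (filter_congr fun b _ => ?_)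
    by_cases hb : b ∈ M <;> simp [extendLast, hb, ha'.1, (Fin.castSucc_lt_last j).ne']
  · refine Eq.trans (congrArg card ?_) (hM a)
    ext b
    by_cases hb : b ∈ M <;> simp [extendLast, hb]

theorem exists_coloring_of_fiber_card [DecidableEq A] (k : ℕ) (l : A → X) (r : A → Y)
    (hl : ∀ a, #{b | l b = l a} = k) (hr : ∀ a, #{b | r b = r a} = k) :
    ∃ c : A → Fin k, ∀ a i,
      #{b | l b = l a ∧ c b = i} = 1 ∧ #{b | r b = r a ∧ c b = i} = 1 := by
  induction k generalizing A with
  | zero =>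
    have : IsEmpty A :=
      ⟨fun a => card_ne_zero_of_mem (s := {b | l b = l a}) (a := a) (by simp) (hl a)⟩
    exact ⟨isEmptyElim, isEmptyElim⟩
  | succ k ih =>
    obtain ⟨M, hMl, hMr⟩ := exists_matching_of_fiber_card k.succ_pos l r hl hr
    obtain ⟨c, hc⟩ := ih (fun a : {a // a ∉ M} => l a) (fun a => r a)
      (fun a => by rw [card_filter_subtype]; simpa using card_filter_notMem_and_eq l hl hMl a)
      (fun a => by rw [card_filter_subtype]; simpa using card_filter_notMem_and_eq r hr hMr a)
    exact ⟨extendLast M c, fun a i =>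
      ⟨card_filter_extendLast l hl hMl c (fun a i => (hc a i).1) a i,
        card_filter_extendLast r hr hMr c (fun a i => (hc a i).2) a i⟩⟩

theorem exists_refinement_of_dvd [DecidableEq A] {k : ℕ} (f : A → X)
    (hf : ∀ x, k ∣ #{a | f a = x}) :
    ∃ g : A → Finset A, (∀ a b, g b = g a → f b = f a) ∧ ∀ a, #{b | g b = g a} = k := by
  have hP (x : X) : #{a | f a = x} / k * k + 0 * (k + 1) = #{a | f a = x} := by
    simpa using Nat.div_mul_cancel (hf x)
  -- an equitable partition without parts of size `k + 1` has all its parts of size `k`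
  let P (x : X) := (⊥ : Finpartition ({a | f a = x} : Finset A)).equitabilise (hP x)
  have hsub (a b : A) (hb : b ∈ (P (f a)).part a) : f b = f a := by
    simpa using (P (f a)).part_subset a hb
  have hmem (a : A) : a ∈ (P (f a)).part a := (P (f a)).mem_part (by simp)
  have hpart (a : A) : (P (f a)).part a ∈ (P (f a)).parts := (P (f a)).part_mem.2 (by simp)
  have hfib (a : A) :
      ({b | (P (f b)).part b = (P (f a)).part a} : Finset A) = (P (f a)).part a := by
    ext b
    simp only [mem_filter, mem_univ, true_and]
    refine ⟨fun h => h ▸ hmem b, fun hb => ?_⟩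
    rw [hsub a b hb]
    exact (P (f a)).part_eq_of_mem (hpart a) hb
  refine ⟨fun a => (P (f a)).part a, fun a b hab => hsub a b ?_, fun a => ?_⟩
  · simp only at hab
    exact hab ▸ hmem b
  rw [hfib]
  rcases Finpartition.card_eq_of_mem_parts_equitabilise (hpart a) with h | h
  · exact h
  · have := Finpartition.card_filter_equitabilise_big ⊥ (hP (f a))
    rw [card_eq_zero, filter_eq_empty_iff] at this
    exact absurd h (this (hpart a))

theorem mul_card_filter_eq_of_refinement {W : Type*} [DecidableEq W] {k : ℕ} (f : A → X)
    (g : A → W) (hgf : ∀ a b, g b = g a → f b = f a) (hg : ∀ a, #{b | g b = g a} = k)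
    (p : A → Prop) [DecidablePred p] (hp : ∀ a, #{b | g b = g a ∧ p b} = 1) (x : X) :
    k * #{a | f a = x ∧ p a} = #{a | f a = x} := by
  set B := ({a | f a = x} : Finset A).image g
  have hB (q) (hq : q ∈ B) : ∃ a, f a = x ∧ g a = q := by simpa [B] using hq
  have hfiber : ({a | f a = x} : Finset A) = ({a | g a ∈ B} : Finset A) := by
    ext a
    simp only [mem_filter, mem_univ, true_and, B, mem_image]
    constructor
    · rintro rfl; exact ⟨a, rfl, rfl⟩
    · rintro ⟨a₀, rfl, h₀⟩; exact hgf a₀ a h₀.symm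
  have h1 : #{a | f a = x ∧ p a} = #B := by
    rw [← filter_filter, hfiber, filter_filter, ← one_mul #B,
      ← card_filter_mem_eq_mul (fun a : {a // p a} => g a) (fun a => ?_) B fun q hq => ?_,
      card_filter_subtype]
    · congr 1; ext; simp [and_comm]
    · rw [card_filter_subtype, ← hp a]; congr 1; ext; simp [and_comm]
    · obtain ⟨a, -, rfl⟩ := hB q hq
      obtain ⟨b, hb⟩ := card_pos.1 ((hp a).symm ▸ Nat.one_pos)
      simp only [mem_filter, mem_univ, true_and] at hb
      exact ⟨⟨b, hb.2⟩, hb.1⟩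
  have h2 : #{a | f a = x} = k * #B := by
    rw [hfiber, card_filter_mem_eq_mul g hg B fun q hq => (hB q hq).imp fun _ h => h.2]
  rw [h1, h2]

def IsExactColoring {k : ℕ} (l : A → X) (r : A → Y) (c : A → Fin k) : Prop :=
  (∀ x i, k * #{a | l a = x ∧ c a = i} = #{a | l a = x}) ∧
    ∀ y i, k * #{a | r a = y ∧ c a = i} = #{a | r a = y}

theorem exists_exactColoring_of_dvd {k : ℕ} (l : A → X) (r : A → Y)
    (hl : ∀ x, k ∣ #{a | l a = x}) (hr : ∀ y, k ∣ #{a | r a = y}) :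
    ∃ c : A → Fin k, IsExactColoring l r c := by
  classical
  obtain ⟨gl, hgl, hgl'⟩ := exists_refinement_of_dvd l hl
  obtain ⟨gr, hgr, hgr'⟩ := exists_refinement_of_dvd r hr
  obtain ⟨c, hc⟩ := exists_coloring_of_fiber_card k gl gr hgl' hgr'
  exact ⟨c, fun x i => mul_card_filter_eq_of_refinement l gl hgl hgl' _ (fun a => (hc a i).1) x,
    fun y i => mul_card_filter_eq_of_refinement r gr hgr hgr' _ (fun a => (hc a i).2) y⟩

theorem dvd_card_filter_of_dvd_others [Fintype X] [Fintype Y] {k : ℕ} (l : A → X) (r : A → Y)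
    (hl : ∀ x, k ∣ #{a | l a = x}) (y₀ : Y) (hr : ∀ y ≠ y₀, k ∣ #{a | r a = y}) :
    k ∣ #{a | r a = y₀} := by
  have h : k ∣ Fintype.card A := by
    rw [← card_univ, card_eq_sum_card_fiberwise (f := l) (t := univ) (by simp)]
    exact dvd_sum fun x _ => hl x
  rw [← card_univ, card_eq_sum_card_fiberwise (f := r) (t := univ) (by simp),
    ← add_sum_erase _ _ (mem_univ y₀)] at h
  exact (Nat.dvd_add_left (dvd_sum fun y hy => hr y (ne_of_mem_erase hy))).1 h

end ExactColoring

section Padding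

variable {X Y : Type*} (m : X → Y → ℕ)

abbrev PadEdge (E : Type*) := E ⊕ Σ p : X × Y, Fin (m p.1 p.2)

variable {m}

def PadEdge.pad (x : X) (y : Y) (j : Fin (m x y)) : PadEdge m E := .inr ⟨(x, y), j⟩

def PadEdge.left (l : E → X) : PadEdge m E → X
  | .inl e => l e
  | .inr p => p.1.1

def PadEdge.right (r : E → Y) : PadEdge m E → Y
  | .inl e => r e
  | .inr p => p.1.2

theorem PadEdge.card_filter_pad_le {α : Type*} [Fintype E] [DecidableEq α]
    (c : PadEdge m E → α) (x : X) (y : Y) (i : α) : #{j | c (pad x y j) = i} ≤ m x y :=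
  (card_filter_le _ _).trans (by simp)

variable [Fintype E] [Fintype X] [Fintype Y]

theorem PadEdge.card_filter_left [DecidableEq X] (l : E → X) (x : X) (Q : PadEdge m E → Prop)
    [DecidablePred Q] :
    #{a | left l a = x ∧ Q a} = #{e | l e = x ∧ Q (.inl e)} + ∑ y, #{j | Q (pad x y j)} := by
  rw [card_filter, card_filter, Fintype.sum_sum_type, Fintype.sum_sigma, Fintype.sum_prod_type,
    Fintype.sum_eq_single x fun x' hx' => by simp [left, hx']]
  congr 1
  refine sum_congr rfl fun y _ => ?_
  simp only [left, pad, true_and]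
  exact (card_filter _ _).symm

theorem PadEdge.card_filter_right [DecidableEq Y] (r : E → Y) (y : Y) (Q : PadEdge m E → Prop)
    [DecidablePred Q] :
    #{a | right r a = y ∧ Q a} = #{e | r e = y ∧ Q (.inl e)} + ∑ x, #{j | Q (pad x y j)} := by
  rw [card_filter, card_filter, Fintype.sum_sum_type, Fintype.sum_sigma, Fintype.sum_prod_type,
    sum_comm, Fintype.sum_eq_single y fun y' hy' => by simp [right, hy']]
  congr 1
  refine sum_congr rfl fun x _ => ?_
  simp only [right, pad, true_and]
  exact (card_filter _ _).symm

end Padding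

theorem sum_card_filter_fin_eq_single {ι : Type*} [Fintype ι] [DecidableEq ι] {n : ι → ℕ}
    (i₀ : ι) (hn : ∀ i ≠ i₀, n i = 0) (P : ∀ i, Fin (n i) → Prop)
    [∀ i, DecidablePred (P i)] :
    ∑ i, #{j | P i j} = #{j | P i₀ j} :=
  Fintype.sum_eq_single i₀ fun i hi => by
    rw [card_eq_zero, filter_eq_empty_iff]
    exact fun j => absurd j.2 (by simp [hn i hi])

/-- For `0 < k`, the least `m` with `k ∣ n + m`. -/
def padTo (k n : ℕ) : ℕ := (-(n : ZMod k)).val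

theorem padTo_lt {k : ℕ} (hk : 0 < k) (n : ℕ) : padTo k n < k :=
  have : NeZero k := ⟨hk.ne'⟩
  ZMod.val_lt _

theorem dvd_add_padTo {k : ℕ} (hk : 0 < k) (n : ℕ) : k ∣ n + padTo k n := by
  have : NeZero k := ⟨hk.ne'⟩
  rw [← ZMod.natCast_eq_zero_iff]
  simp [padTo]

theorem padTo_eq_of_modEq {k m n : ℕ} (h : m ≡ n [MOD k]) : padTo k m = padTo k n := by
  rw [padTo, padTo, (ZMod.natCast_eq_natCast_iff _ _ _).2 h]

theorem abs_sub_div_lt_one {k o l d n : ℕ} (hk : 0 < k) (h : k * (o + l) = d + n) (hn : n < k)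
    (hl : l ≤ 1) (hln : l ≤ n) : |(o : ℝ) - d / k| < 1 := by
  have hk' : (0 : ℝ) < k := by exact_mod_cast hk
  have hod : (o : ℝ) - d / k = (n - k * l) / k := by
    field_simp
    have : (k : ℝ) * (o + l) = d + n := by exact_mod_cast h
    linarith
  have hlt : |(n : ℝ) - k * l| < k := by
    have hn' : (n : ℝ) < k := by exact_mod_cast hn
    have hl' : (l : ℝ) ≤ 1 := by exact_mod_cast hl
    have hln' : (l : ℝ) ≤ n := by exact_mod_cast hln
    have hk1 : (1 : ℝ) ≤ k := by exact_mod_cast hk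
    rw [abs_lt]
    constructor <;> nlinarith [mul_nonneg (sub_nonneg.2 hk1) (sub_nonneg.2 hl'),
      mul_nonneg hk'.le (Nat.cast_nonneg (α := ℝ) l)]
  rw [hod, abs_div, abs_of_pos hk']
  exact (div_lt_one hk').2 hlt

theorem add_modEq_sub_div {k o i l d d' n : ℕ} (hk : 0 < k) (ho : k * (o + l) = d + n)
    (hi : k * (i + l) = d' + n) : ((o + i : ℕ) : ℤ) ≡ ((d : ℤ) - d') / k [ZMOD 2] := by
  have h : (d : ℤ) - d' = k * (o - i) := by
    have ho' : (k : ℤ) * (o + l) = d + n := by exact_mod_cast ho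
    have hi' : (k : ℤ) * (i + l) = d' + n := by exact_mod_cast hi
    linarith
  rw [h, Int.mul_ediv_cancel_left _ (by exact_mod_cast hk.ne')]
  exact Int.modEq_iff_dvd.2 ⟨-i, by push_cast; ring⟩

theorem outdeg_filter [DecidableEq V] (ends : E → V × V) [Fintype E] (p : E → Prop)
    [DecidablePred p] (v : V) : outdeg ends {e | p e} v = #{e | (ends e).1 = v ∧ p e} := by
  simp only [outdeg, filter_filter, and_comm]

theorem indeg_filter [DecidableEq V] (ends : E → V × V) [Fintype E] (p : E → Prop)
    [DecidablePred p] (v : V) : indeg ends {e | p e} v = #{e | (ends e).2 = v ∧ p e} := by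
  simp only [indeg, filter_filter, and_comm]

section Gadget

variable [Fintype V] [Fintype E] [DecidableEq V] (ends : E → V × V) (k : ℕ)

abbrev IsBalanced (v : V) : Prop := outdeg ends univ v ≡ indeg ends univ v [MOD k]

def outPad (v : V) : ℕ := padTo k (outdeg ends univ v)

def inPad (v : V) : ℕ := padTo k (indeg ends univ v)

def sinkPad (v : V) : ℕ := if IsBalanced ends k v then 0 else padTo k (outPad ends k v)

/-- Multiplicities of the dummy edges. On both sides `.inl v` is the copy of `v` (`v⁺` on the
left, `v⁻` on the right), `.inr (.inl v)` its auxiliary vertex (`w'_v` on the left, `w_v` on the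
right) and `.inr (.inr ())` the sink. -/
def gadget : V ⊕ V ⊕ Unit → V ⊕ V ⊕ Unit → ℕ
  | .inl v, .inr (.inl u) => if u = v then outPad ends k v else 0
  | .inr (.inl v), .inl u => if u = v then inPad ends k v else 0
  | .inr (.inl v), .inr (.inl u) =>
      if u = v ∧ IsBalanced ends k v then padTo k (outPad ends k v) else 0
  | .inr (.inr ()), .inr (.inl u) => sinkPad ends k u
  | .inr (.inl v), .inr (.inr ()) => if IsBalanced ends k v then 0 else padTo k (inPad ends k v)
  | .inr (.inr ()), .inr (.inr ()) => padTo k (∑ u, sinkPad ends k u)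
  | _, _ => 0

abbrev GadgetEdge := PadEdge (gadget ends k) E

def gadgetLeft : GadgetEdge ends k → V ⊕ V ⊕ Unit := PadEdge.left fun e => .inl (ends e).1

def gadgetRight : GadgetEdge ends k → V ⊕ V ⊕ Unit := PadEdge.right fun e => .inl (ends e).2

variable {ends k} (Q : GadgetEdge ends k → Prop) [DecidablePred Q] (v : V)

theorem card_filter_gadgetLeft_inl :
    #{a | gadgetLeft ends k a = .inl v ∧ Q a} = #{e | (ends e).1 = v ∧ Q (.inl e)} +
      #{j | Q (.pad (.inl v) (.inr (.inl v)) j)} := by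
  rw [gadgetLeft, PadEdge.card_filter_left, sum_card_filter_fin_eq_single (.inr (.inl v))]
  · simp
  · rintro (u | u | ⟨⟩) hu <;> simp_all [gadget, eq_comm]

theorem card_filter_gadgetRight_inl :
    #{a | gadgetRight ends k a = .inl v ∧ Q a} = #{e | (ends e).2 = v ∧ Q (.inl e)} +
      #{j | Q (.pad (.inr (.inl v)) (.inl v) j)} := by
  rw [gadgetRight, PadEdge.card_filter_right, sum_card_filter_fin_eq_single (.inr (.inl v))]
  · simp
  · rintro (u | u | ⟨⟩) hu <;> simp_all [gadget, eq_comm]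

theorem card_filter_gadgetLeft_inr_inl :
    #{a | gadgetLeft ends k a = .inr (.inl v) ∧ Q a} =
      #{j | Q (.pad (.inr (.inl v)) (.inl v) j)} +
      #{j | Q (.pad (.inr (.inl v)) (.inr (.inl v)) j)} +
      #{j | Q (.pad (.inr (.inl v)) (.inr (.inr ())) j)} := by
  rw [gadgetLeft, PadEdge.card_filter_left, Fintype.sum_sum_type, Fintype.sum_sum_type,
    sum_card_filter_fin_eq_single v, sum_card_filter_fin_eq_single v]
  · simp [add_assoc]
  all_goals intro u hu; simp [gadget, hu]

theorem card_filter_gadgetRight_inr_inl :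
    #{a | gadgetRight ends k a = .inr (.inl v) ∧ Q a} =
      #{j | Q (.pad (.inl v) (.inr (.inl v)) j)} +
      #{j | Q (.pad (.inr (.inl v)) (.inr (.inl v)) j)} +
      #{j | Q (.pad (.inr (.inr ())) (.inr (.inl v)) j)} := by
  rw [gadgetRight, PadEdge.card_filter_right, Fintype.sum_sum_type, Fintype.sum_sum_type,
    sum_card_filter_fin_eq_single v, sum_card_filter_fin_eq_single v]
  · simp [add_assoc]
  all_goals intro u hu; simp [gadget, hu.symm]

theorem card_gadgetLeft_inl :
    #{a | gadgetLeft ends k a = .inl v} = outdeg ends univ v + outPad ends k v := by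
  have := card_filter_gadgetLeft_inl (fun _ : GadgetEdge ends k => True) v
  simp only [and_true, filter_true, card_univ, Fintype.card_fin] at this
  rw [this]; simp [gadget, outdeg]

theorem card_gadgetRight_inl :
    #{a | gadgetRight ends k a = .inl v} = indeg ends univ v + inPad ends k v := by
  have := card_filter_gadgetRight_inl (fun _ : GadgetEdge ends k => True) v
  simp only [and_true, filter_true, card_univ, Fintype.card_fin] at this
  rw [this]; simp [gadget, indeg]

theorem card_gadgetRight_inr_inl :
    #{a | gadgetRight ends k a = .inr (.inl v)} = outPad ends k v + padTo k (outPad ends k v) := by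
  have := card_filter_gadgetRight_inr_inl (fun _ : GadgetEdge ends k => True) v
  simp only [and_true, filter_true, card_univ, Fintype.card_fin] at this
  rw [this]
  by_cases hv : IsBalanced ends k v <;> simp [gadget, sinkPad, hv]

theorem card_gadgetLeft_inr_inl_of_isBalanced (hv : IsBalanced ends k v) :
    #{a | gadgetLeft ends k a = .inr (.inl v)} = outPad ends k v + padTo k (outPad ends k v) := by
  have := card_filter_gadgetLeft_inr_inl (fun _ : GadgetEdge ends k => True) v
  simp only [and_true, filter_true, card_univ, Fintype.card_fin] at this
  rw [this]; simp [gadget, hv, inPad, outPad, padTo_eq_of_modEq hv]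

theorem card_gadgetLeft_inr_inl_of_not_isBalanced (hv : ¬ IsBalanced ends k v) :
    #{a | gadgetLeft ends k a = .inr (.inl v)} = inPad ends k v + padTo k (inPad ends k v) := by
  have := card_filter_gadgetLeft_inr_inl (fun _ : GadgetEdge ends k => True) v
  simp only [and_true, filter_true, card_univ, Fintype.card_fin] at this
  rw [this]; simp [gadget, hv]

theorem dvd_card_gadgetLeft (hk : 0 < k) (x : V ⊕ V ⊕ Unit) :
    k ∣ #{a | gadgetLeft ends k a = x} := by
  rcases x with v | v | ⟨⟩
  · rw [card_gadgetLeft_inl]; exact dvd_add_padTo hk _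
  · by_cases hv : IsBalanced ends k v
    · rw [card_gadgetLeft_inr_inl_of_isBalanced v hv]; exact dvd_add_padTo hk _
    · rw [card_gadgetLeft_inr_inl_of_not_isBalanced v hv]; exact dvd_add_padTo hk _
  · have := PadEdge.card_filter_left (fun e => Sum.inl (ends e).1) (.inr (.inr ()))
      (fun _ : GadgetEdge ends k => True)
    simp only [and_true, filter_true, card_univ, Fintype.card_fin] at this
    rw [gadgetLeft, this]
    simpa [gadget, Fintype.sum_sum_type] using dvd_add_padTo hk _

theorem dvd_card_gadgetRight (hk : 0 < k) (y : V ⊕ V ⊕ Unit) :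
    k ∣ #{a | gadgetRight ends k a = y} := by
  have hcopy : ∀ y, y ≠ .inr (.inr ()) → k ∣ #{a | gadgetRight ends k a = y} := by
    rintro (v | v | ⟨⟩) hy
    · rw [card_gadgetRight_inl]; exact dvd_add_padTo hk _
    · rw [card_gadgetRight_inr_inl]; exact dvd_add_padTo hk _
    · exact absurd rfl hy
  by_cases hy : y = .inr (.inr ())
  · exact hy ▸ dvd_card_filter_of_dvd_others _ _ (dvd_card_gadgetLeft hk) _ hcopy
  · exact hcopy y hy

variable {c : GadgetEdge ends k → Fin k}

theorem mul_outdeg_add_card (hc : IsExactColoring (gadgetLeft ends k) (gadgetRight ends k) c)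
    (i : Fin k) :
    k * (outdeg ends {e | c (.inl e) = i} v + #{j | c (.pad (.inl v) (.inr (.inl v)) j) = i}) =
      outdeg ends univ v + outPad ends k v := by
  rw [← card_gadgetLeft_inl, ← hc.1, card_filter_gadgetLeft_inl, outdeg_filter]

theorem mul_indeg_add_card (hc : IsExactColoring (gadgetLeft ends k) (gadgetRight ends k) c)
    (i : Fin k) :
    k * (indeg ends {e | c (.inl e) = i} v + #{j | c (.pad (.inr (.inl v)) (.inl v) j) = i}) =
      indeg ends univ v + inPad ends k v := by
  rw [← card_gadgetRight_inl, ← hc.2, card_filter_gadgetRight_inl, indeg_filter]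

theorem card_outPad_color_le_one (hk : 0 < k)
    (hc : IsExactColoring (gadgetLeft ends k) (gadgetRight ends k) c) (i : Fin k) :
    #{j | c (.pad (.inl v) (.inr (.inl v)) j) = i} ≤ 1 := by
  have h := hc.2 (.inr (.inl v)) i
  rw [card_filter_gadgetRight_inr_inl, card_gadgetRight_inr_inl] at h
  have : outPad ends k v < k := padTo_lt hk _
  have := padTo_lt hk (outPad ends k v)
  have := Nat.lt_of_mul_lt_mul_left (h.trans_lt (by omega : _ < k * 2))
  omega

theorem card_inPad_color_le_one (hk : 0 < k)
    (hc : IsExactColoring (gadgetLeft ends k) (gadgetRight ends k) c) (i : Fin k) :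
    #{j | c (.pad (.inr (.inl v)) (.inl v) j) = i} ≤ 1 := by
  have h := hc.1 (.inr (.inl v)) i
  rw [card_filter_gadgetLeft_inr_inl] at h
  have hlt : #{a | gadgetLeft ends k a = .inr (.inl v)} < k * 2 := by
    by_cases hv : IsBalanced ends k v
    · rw [card_gadgetLeft_inr_inl_of_isBalanced v hv]
      have : outPad ends k v < k := padTo_lt hk _
      have := padTo_lt hk (outPad ends k v)
      omega
    · rw [card_gadgetLeft_inr_inl_of_not_isBalanced v hv]
      have : inPad ends k v < k := padTo_lt hk _
      have := padTo_lt hk (inPad ends k v)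
      omega
  have := Nat.lt_of_mul_lt_mul_left (h.trans_lt hlt)
  omega

theorem card_outPad_color_eq_card_inPad_color (hk : 0 < k)
    (hc : IsExactColoring (gadgetLeft ends k) (gadgetRight ends k) c) (hv : IsBalanced ends k v)
    (i : Fin k) :
    #{j | c (.pad (.inl v) (.inr (.inl v)) j) = i} =
      #{j | c (.pad (.inr (.inl v)) (.inl v) j) = i} := by
  have hr := hc.2 (.inr (.inl v)) i
  have hl := hc.1 (.inr (.inl v)) i
  rw [card_filter_gadgetRight_inr_inl, card_gadgetRight_inr_inl] at hr
  rw [card_filter_gadgetLeft_inr_inl, card_gadgetLeft_inr_inl_of_isBalanced v hv] at hl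
  have hz : #{j | c (.pad (.inr (.inr ())) (.inr (.inl v)) j) = i} = 0 :=
    Nat.le_zero.1 ((PadEdge.card_filter_pad_le c _ _ i).trans (by simp [gadget, sinkPad, hv]))
  have hz' : #{j | c (.pad (.inr (.inl v)) (.inr (.inr ())) j) = i} = 0 :=
    Nat.le_zero.1 ((PadEdge.card_filter_pad_le c _ _ i).trans (by simp [gadget, hv]))
  have := Nat.eq_of_mul_eq_mul_left hk (hr.trans hl.symm)
  omega

theorem abs_outdeg_color_sub_lt (hk : 0 < k)
    (hc : IsExactColoring (gadgetLeft ends k) (gadgetRight ends k) c) (i : Fin k) :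
    |(outdeg ends {e | c (.inl e) = i} v : ℝ) - outdeg ends univ v / k| < 1 :=
  abs_sub_div_lt_one hk (mul_outdeg_add_card v hc i) (padTo_lt hk _)
    (card_outPad_color_le_one v hk hc i)
    ((PadEdge.card_filter_pad_le c _ _ i).trans (by simp [gadget, outPad]))

theorem abs_indeg_color_sub_lt (hk : 0 < k)
    (hc : IsExactColoring (gadgetLeft ends k) (gadgetRight ends k) c) (i : Fin k) :
    |(indeg ends {e | c (.inl e) = i} v : ℝ) - indeg ends univ v / k| < 1 :=
  abs_sub_div_lt_one hk (mul_indeg_add_card v hc i) (padTo_lt hk _)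
    (card_inPad_color_le_one v hk hc i)
    ((PadEdge.card_filter_pad_le c _ _ i).trans (by simp [gadget, inPad]))

theorem outdeg_add_indeg_color_modEq (hk : 0 < k)
    (hc : IsExactColoring (gadgetLeft ends k) (gadgetRight ends k) c) (hv : IsBalanced ends k v)
    (i : Fin k) :
    ((outdeg ends {e | c (.inl e) = i} v + indeg ends {e | c (.inl e) = i} v : ℕ) : ℤ) ≡
      ((outdeg ends univ v : ℤ) - indeg ends univ v) / k [ZMOD 2] := by
  have ho := mul_outdeg_add_card v hc i
  have hi := mul_indeg_add_card v hc i
  rw [card_outPad_color_eq_card_inPad_color v hk hc hv i] at ho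
  rw [inPad, ← padTo_eq_of_modEq hv] at hi
  exact add_modEq_sub_div hk ho hi

end Gadget

/-- Directed equitable factorization with, in addition, a parity condition at every
vertex `u` with `d⁺(u) ≡ d⁻(u) (mod k)`. -/
theorem directed_equitable_factorization_parity [Fintype V] [Fintype E] [DecidableEq V]
    (ends : E → V × V) (k : ℕ) (hk : 0 < k) :
    ∃ c : E → Fin k,
      (∀ v : V, ∀ i : Fin k,
        (|((outdeg ends (univ.filter fun e => c e = i) v : ℝ)) -
            (outdeg ends univ v : ℝ) / (k : ℝ)| < 1) ∧
        (|((indeg ends (univ.filter fun e => c e = i) v : ℝ)) -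
            (indeg ends univ v : ℝ) / (k : ℝ)| < 1)) ∧
      (∀ u : V, outdeg ends univ u ≡ indeg ends univ u [MOD k] →
        ∀ i : Fin k,
          ((outdeg ends (univ.filter fun e => c e = i) u +
              indeg ends (univ.filter fun e => c e = i) u : ℕ) : ℤ) ≡
            ((outdeg ends univ u : ℤ) - (indeg ends univ u : ℤ)) / (k : ℤ) [ZMOD 2]) := by
  obtain ⟨c, hc⟩ := exists_exactColoring_of_dvd (gadgetLeft ends k) (gadgetRight ends k)
    (dvd_card_gadgetLeft hk) (dvd_card_gadgetRight hk)
  exact ⟨fun e => c (.inl e),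
    fun v i => ⟨abs_outdeg_color_sub_lt v hk hc i, abs_indeg_color_sub_lt v hk hc i⟩,
    fun u hu i => outdeg_add_indeg_color_modEq u hk hc hu i⟩
end

section
/- Every multigraph G can be edge-decomposed into k spanning subgraphs G_1, …, G_k such that | |E(G_i)| − |E(G)|/k | < 1 for each i, and for each vertex v and each i, ⌊d_G(v)/(2k)⌋ + ⌊(d_G(v)+1)/(2k)⌋ ≤ d_{G_i}(v) ≤ ⌈d_G(v)/(2k)⌉ + ⌈(d_G(v)−1)/(2k)⌉. -/
/-!
Orient the edges so that at every vertex in- and out-degree differ by at most one, by peeling off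
maximal trails that start at an odd vertex while there is one. Splitting each vertex into a tail
copy and a head copy gives a bipartite multigraph in which the copies of `v` have degrees
`⌊d(v)/2⌋` and `⌈d(v)/2⌉`. In a bipartite multigraph, colouring the edges by the direction of a
balanced orientation (balanced also across the bipartition) splits it into two halves that are
equal up to one in size and at every vertex; hence a `k`-colouring minimising
`∑ᵢ (|Eᵢ|² + ∑ₓ d_{Eᵢ}(x)²)` is equitable, and its classes have about `1/k` of every degree of
the split graph and of the edges. Recombining the two copies of `v` gives the degree bounds.
-/

open Finset

variable {V E : Type*}

/-- Degree of `v` in the sub-multigraph given by the edge set `S`,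
where `ends e` gives the two endpoints of edge `e` (loops count twice). -/
def mdeg [DecidableEq V] (ends : E → V × V) (S : Finset E) (v : V) : ℕ :=
  (S.filter fun e => (ends e).1 = v).card + (S.filter fun e => (ends e).2 = v).card

/-- Number of edges with exactly one end in the vertex set `X`. -/
def cutCard [Fintype E] [DecidableEq V] (ends : E → V × V) (X : Finset V) : ℕ :=
  (univ.filter fun e : E =>
    ((ends e).1 ∈ X ∧ (ends e).2 ∉ X) ∨ ((ends e).1 ∉ X ∧ (ends e).2 ∈ X)).card

/-- `lam`-edge-connectedness: every edge cut has at least `lam` edges. -/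
def EdgeConn [Fintype V] [Fintype E] [DecidableEq V] (ends : E → V × V) (lam : ℕ) : Prop :=
  ∀ X : Finset V, X.Nonempty → X ≠ univ → lam ≤ cutCard ends X

section Orientation

def IsOrientation (g f : E → V × V) : Prop :=
  ∀ e, f e = g e ∨ f e = (g e).swap

/-- With `φ = Pi.single v 1` this is in-degree minus out-degree at `v`; with `φ` the indicator
of a vertex set, the net number of edges entering it. -/
def netInflow (f : E → V × V) (T : Finset E) (φ : V → ℤ) : ℤ :=
  ∑ e ∈ T, (φ (f e).2 - φ (f e).1)

lemma IsOrientation.refl (g : E → V × V) : IsOrientation g g := fun _ => .inl rfl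

lemma IsOrientation.swap {g f : E → V × V} (hf : IsOrientation g f) :
    IsOrientation g fun e => (f e).swap := by
  intro e
  rcases hf e with h | h <;> simp [h]

lemma IsOrientation.piecewise [DecidableEq E] {g f₁ f₂ : E → V × V} (h₁ : IsOrientation g f₁)
    (h₂ : IsOrientation g f₂) (T : Finset E) :
    IsOrientation g fun e => if e ∈ T then f₁ e else f₂ e := by
  intro e
  dsimp only
  split_ifs
  exacts [h₁ e, h₂ e]

@[simp] lemma netInflow_empty (f : E → V × V) (φ : V → ℤ) : netInflow f ∅ φ = 0 := rfl

lemma netInflow_swap (f : E → V × V) (T : Finset E) (φ : V → ℤ) :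
    netInflow (fun e => (f e).swap) T φ = -netInflow f T φ := by
  simp [netInflow]

lemma netInflow_piecewise [DecidableEq E] (f₁ f₂ : E → V × V) {S T : Finset E} (hTS : T ⊆ S)
    (φ : V → ℤ) :
    netInflow (fun e => if e ∈ T then f₁ e else f₂ e) S φ =
      netInflow f₂ (S \ T) φ + netInflow f₁ T φ := by
  rw [netInflow, ← Finset.sum_sdiff hTS]
  congr 1
  · exact Finset.sum_congr rfl fun e he => by rw [if_neg (Finset.mem_sdiff.1 he).2]
  · exact Finset.sum_congr rfl fun e he => by rw [if_pos he]

variable [DecidableEq V]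

lemma mdeg_eq_sum (g : E → V × V) (S : Finset E) (v : V) :
    mdeg g S v = ∑ e ∈ S, ((if (g e).1 = v then 1 else 0) + (if (g e).2 = v then 1 else 0)) := by
  rw [mdeg, Finset.card_filter, Finset.card_filter, Finset.sum_add_distrib]

lemma mdeg_sdiff_add [DecidableEq E] (g : E → V × V) {S T : Finset E} (hTS : T ⊆ S) (v : V) :
    mdeg g (S \ T) v + mdeg g T v = mdeg g S v := by
  simp only [mdeg_eq_sum]
  exact Finset.sum_sdiff hTS

lemma mdeg_union [DecidableEq E] (g : E → V × V) {S T : Finset E} (h : Disjoint S T) (v : V) :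
    mdeg g (S ∪ T) v = mdeg g S v + mdeg g T v := by
  simp only [mdeg_eq_sum]
  exact Finset.sum_union h

lemma exists_mem_of_mdeg_ne_zero {g : E → V × V} {S : Finset E} {v : V} (h : mdeg g S v ≠ 0) :
    ∃ e ∈ S, (g e).1 = v ∨ (g e).2 = v := by
  by_contra! hS
  refine h ?_
  rw [mdeg, Finset.filter_eq_empty_iff.2 fun e he => (hS e he).1,
    Finset.filter_eq_empty_iff.2 fun e he => (hS e he).2, Finset.card_empty]

lemma IsOrientation.mdeg_eq {g f : E → V × V} (hf : IsOrientation g f) (S : Finset E) (v : V) :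
    mdeg f S v = mdeg g S v := by
  simp only [mdeg_eq_sum]
  refine Finset.sum_congr rfl fun e _ => ?_
  rcases hf e with h | h <;> rw [h]
  simp [add_comm]

lemma netInflow_single (f : E → V × V) (T : Finset E) (v : V) :
    netInflow f T (Pi.single v 1) =
      (T.filter fun e => (f e).2 = v).card - (T.filter fun e => (f e).1 = v).card := by
  simp [netInflow, Pi.single_apply, Finset.sum_sub_distrib, Finset.sum_boole]

lemma IsOrientation.mdeg_eq_netInflow_add {g f : E → V × V} (hf : IsOrientation g f)
    (T : Finset E) (v : V) :
    (mdeg g T v : ℤ) =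
      netInflow f T (Pi.single v 1) + 2 * (T.filter fun e => (f e).1 = v).card := by
  rw [← hf.mdeg_eq, netInflow_single, mdeg]
  push_cast
  ring

/-- `T`, oriented by `f`, is a trail from `u` to `z`, recorded through its net inflows; it is
built greedily, so no edge of `S \ T` is left at `z`. -/
lemma exists_trail [DecidableEq E] (g : E → V × V) (S : Finset E) (u : V) :
    ∃ T ⊆ S, ∃ f z, IsOrientation g f ∧ (∀ φ, netInflow f T φ = φ z - φ u) ∧
      mdeg g (S \ T) z = 0 ∧ (mdeg g S u ≠ 0 → T.Nonempty) := by
  induction S using Finset.strongInduction generalizing u with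
  | H S ih =>
  by_cases hu : mdeg g S u = 0
  · exact ⟨∅, Finset.empty_subset _, g, u, .refl g, by simp, by simpa using hu,
      fun h => absurd hu h⟩
  obtain ⟨e, heS, hue⟩ := exists_mem_of_mdeg_ne_zero hu
  set a := if (g e).1 = u then (g e).2 else (g e).1 with ha
  obtain ⟨T, hTS, f, z, hf, hflow, hz, -⟩ := ih (S.erase e) (Finset.erase_ssubset heS) a
  have heT : e ∉ T := fun h => Finset.notMem_erase e S (hTS h)
  refine ⟨insert e T, Finset.insert_subset heS (hTS.trans (Finset.erase_subset e S)),
    Function.update f e (u, a), z, fun e' => ?_, fun φ => ?_, ?_,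
    fun _ => Finset.insert_nonempty e T⟩
  · rcases eq_or_ne e' e with rfl | h
    · by_cases h1 : (g e').1 = u
      · simpa [ha, h1] using .inl (Prod.ext h1.symm rfl)
      · simpa [ha, h1] using .inr (Prod.ext (hue.resolve_left h1).symm rfl)
    · simpa [h] using hf e'
  · rw [netInflow, Finset.sum_insert heT, Function.update_self]
    rw [Finset.sum_congr rfl fun e' he' => by
      rw [Function.update_of_ne (ne_of_mem_of_not_mem he' heT)]]
    rw [← netInflow, hflow]
    ring
  · rwa [Finset.sdiff_insert, ← Finset.erase_sdiff_comm]

lemma abs_netInflow_piecewise_single_le [DecidableEq E] {g f₀ f : E → V × V} {S T : Finset E}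
    {u z : V} (hTS : T ⊆ S) (hf₀ : IsOrientation g f₀)
    (hT : (∀ ψ, netInflow f₀ T ψ = ψ z - ψ u) ∨ (∀ ψ, netInflow f₀ T ψ = ψ u - ψ z))
    (hz : mdeg g (S \ T) z = 0) (hu : ∀ w, mdeg g S w % 2 = 1 → mdeg g S u % 2 = 1)
    (hf : ∀ v, |netInflow f (S \ T) (Pi.single v 1)| ≤ (mdeg g (S \ T) v % 2 : ℕ)) (v : V) :
    |netInflow (fun e => if e ∈ T then f₀ e else f e) S (Pi.single v 1)| ≤
      (mdeg g S v % 2 : ℕ) := by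
  have hT' : ∀ w, netInflow f₀ T (Pi.single w 1) =
      (if z = w then 1 else 0) - (if u = w then 1 else 0) ∨ netInflow f₀ T (Pi.single w 1) =
      (if u = w then 1 else 0) - (if z = w then 1 else 0) := fun w => by
    rcases hT with h | h <;> simp [h, Pi.single_apply]
  have hsplit := mdeg_sdiff_add g hTS
  have hpar := hf₀.mdeg_eq_netInflow_add T
  -- an open trail leaves `z` with odd degree, so `u` was chosen odd
  have hu' : u ≠ z → mdeg g S u % 2 = 1 := fun huz => hu z <| by
    have h₁ := hpar z
    have h₂ := hsplit z
    rcases hT' z with h | h <;> simp only [if_neg huz, ↓reduceIte] at h <;> omega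
  rw [netInflow_piecewise _ _ hTS]
  have hfv := hf v
  have hparv := hpar v
  have hsplitv := hsplit v
  rw [abs_le] at hfv ⊢
  by_cases hzv : z = v
  · subst hzv
    by_cases huz : u = z
    · subst huz
      rcases hT' u with h | h <;> simp only [↓reduceIte] at h <;> omega
    · rcases hT' z with h | h <;> simp only [if_neg huz, ↓reduceIte] at h <;> omega
  · by_cases huv : u = v
    · subst huv
      have := hu' (Ne.symm hzv)
      rcases hT' u with h | h <;> simp only [if_neg hzv, ↓reduceIte] at h <;> omega
    · rcases hT' v with h | h <;> simp only [if_neg huv, if_neg hzv] at h <;> omega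

/-- Peel off a trail that starts at an odd vertex (if any) and ends where it gets stuck;
reversing it if necessary keeps the `φ`-inflow balanced. -/
theorem exists_balanced_orientation [DecidableEq E] (g : E → V × V) (φ : V → ℤ)
    (hφ : ∀ x y, |φ x - φ y| ≤ 1) (S : Finset E) :
    ∃ f, IsOrientation g f ∧ (∀ v, |netInflow f S (Pi.single v 1)| ≤ (mdeg g S v % 2 : ℕ)) ∧
      |netInflow f S φ| ≤ 1 := by
  induction S using Finset.strongInduction with
  | H S ih =>
  rcases S.eq_empty_or_nonempty with rfl | ⟨e, he⟩
  · exact ⟨g, .refl g, by simp [mdeg], by simp⟩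
  obtain ⟨u, hu, hu_odd⟩ : ∃ u, mdeg g S u ≠ 0 ∧
      ∀ w, mdeg g S w % 2 = 1 → mdeg g S u % 2 = 1 := by
    by_cases hodd : ∃ w, mdeg g S w % 2 = 1
    · obtain ⟨w, hw⟩ := hodd
      exact ⟨w, by omega, fun _ _ => hw⟩
    · refine ⟨(g e).1, ?_, fun w hw => (hodd ⟨w, hw⟩).elim⟩
      have : 0 < (S.filter fun e' => (g e').1 = (g e).1).card :=
        Finset.card_pos.2 ⟨e, Finset.mem_filter.2 ⟨he, rfl⟩⟩
      rw [mdeg]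
      omega
  obtain ⟨T, hTS, fT, z, hfT, hflowT, hz, hTne⟩ := exists_trail g S u
  obtain ⟨f', hf', hdeg', hφ'⟩ := ih (S \ T) (Finset.sdiff_ssubset hTS (hTne hu))
  obtain ⟨f₀, hf₀, hT, hφ₀⟩ : ∃ f₀, IsOrientation g f₀ ∧
      ((∀ ψ, netInflow f₀ T ψ = ψ z - ψ u) ∨ (∀ ψ, netInflow f₀ T ψ = ψ u - ψ z)) ∧
      |netInflow f' (S \ T) φ + netInflow f₀ T φ| ≤ 1 := by
    have hb := hφ z u
    rw [abs_le] at hφ' hb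
    rcases le_or_gt 0 (netInflow f' (S \ T) φ * (φ z - φ u)) with h | h
    · refine ⟨_, hfT.swap, .inr fun ψ => by rw [netInflow_swap, hflowT, neg_sub], ?_⟩
      rw [netInflow_swap, hflowT, abs_le]
      constructor <;> nlinarith
    · refine ⟨fT, hfT, .inl hflowT, ?_⟩
      rw [hflowT, abs_le]
      constructor <;> nlinarith
  exact ⟨_, hf₀.piecewise hf' T, abs_netInflow_piecewise_single_le hTS hf₀ hT hz hu_odd hdeg',
    by rwa [netInflow_piecewise _ _ hTS]⟩

end Orientation

section Bipartite
variable [DecidableEq V]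

/-- In a bipartite multigraph (sides `β = false` and `β = true`), colour an edge by whether a
balanced orientation runs it from the `false` side to the `true` side. -/
theorem exists_balanced_split [DecidableEq E] (g : E → V × V) (β : V → Bool)
    (hβ : ∀ e, β (g e).1 = false ∧ β (g e).2 = true) (S : Finset E) :
    ∃ S₁ ⊆ S, (∀ v, |(mdeg g S₁ v : ℤ) - mdeg g (S \ S₁) v| ≤ 1) ∧
      |(S₁.card : ℤ) - (S \ S₁).card| ≤ 1 := by
  obtain ⟨f, hf, hdeg, hcut⟩ := exists_balanced_orientation g (fun v => if β v then 1 else 0)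
    (fun x y => by split_ifs <;> simp) S
  set S₁ := S.filter fun e => f e = g e
  have hinflow : ∀ ψ : V → ℤ, netInflow f S ψ =
      ∑ e ∈ S₁, (ψ (g e).2 - ψ (g e).1) - ∑ e ∈ S \ S₁, (ψ (g e).2 - ψ (g e).1) := by
    intro ψ
    rw [netInflow, ← Finset.sum_filter_add_sum_filter_not S (fun e => f e = g e),
      Finset.filter_not, sub_eq_add_neg, ← Finset.sum_neg_distrib]
    congr 1
    · exact Finset.sum_congr rfl fun e he => by rw [(Finset.mem_filter.1 he).2]
    · refine Finset.sum_congr rfl fun e he => ?_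
      have hne : ¬ f e = g e := fun h => (Finset.mem_sdiff.1 he).2 (Finset.mem_filter.2
        ⟨(Finset.mem_sdiff.1 he).1, h⟩)
      rw [(hf e).resolve_left hne]
      simp
  refine ⟨S₁, Finset.filter_subset _ _, fun v => ?_, ?_⟩
  · have hterm : ∀ e, (Pi.single v 1 : V → ℤ) (g e).2 - (Pi.single v 1 : V → ℤ) (g e).1 =
        (if β v then 1 else -1) *
          ((if (g e).1 = v then 1 else 0) + (if (g e).2 = v then 1 else 0)) := by
      intro e
      obtain ⟨h1, h2⟩ := hβ e
      simp only [Pi.single_apply]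
      split_ifs <;> simp_all
    have h := hdeg v
    simp only [hinflow, hterm, ← Finset.mul_sum, ← mul_sub, abs_mul] at h
    rw [mdeg_eq_sum, mdeg_eq_sum]
    push_cast
    have hsign : |(if β v then 1 else -1 : ℤ)| = 1 := by split_ifs <;> simp
    rw [hsign, one_mul] at h
    exact h.trans (by omega)
  · have h := hcut
    simp only [hinflow, hβ, ↓reduceIte, Bool.false_eq_true, sub_zero] at h
    simpa using h

end Bipartite

lemma abs_card_mul_sub_sum_lt {ι : Type*} [Fintype ι] (x : ι → ℕ) (hx : ∀ i j, x i ≤ x j + 1)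
    (i : ι) : |(Fintype.card ι * x i : ℤ) - ∑ j, (x j : ℤ)| < Fintype.card ι := by
  classical
  have hsum : ∑ j, (x j : ℤ) - Fintype.card ι * x i = ∑ j ∈ univ.erase i, ((x j : ℤ) - x i) := by
    rw [Finset.sum_erase _ (by simp), Finset.sum_sub_distrib, Finset.sum_const, Finset.card_univ,
      nsmul_eq_mul]
  have hle : |∑ j ∈ univ.erase i, ((x j : ℤ) - x i)| ≤ ((univ.erase i).card : ℤ) := by
    refine (Finset.abs_sum_le_sum_abs _ _).trans ?_
    simpa using Finset.sum_le_sum fun j (_ : j ∈ univ.erase i) =>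
      (abs_le.2 ⟨by have := hx i j; omega, by have := hx j i; omega⟩ : |(x j : ℤ) - x i| ≤ 1)
  have hcard : ((univ.erase i).card : ℤ) < Fintype.card ι := by
    rw [Finset.card_erase_of_mem (Finset.mem_univ i), Finset.card_univ]
    have := Fintype.card_pos_iff.2 ⟨i⟩
    omega
  rw [abs_sub_comm, hsum]
  exact hle.trans_lt hcard

/-- `2 (a² + b²) = (a + b)² + (a - b)²`, and `a - b` has the parity of `a' - b'`. -/
lemma sq_add_sq_le_of_abs_sub_le_one {a b a' b' : ℕ} (hs : a' + b' = a + b)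
    (h : |(a' : ℤ) - b'| ≤ 1) :
    a' ^ 2 + b' ^ 2 ≤ a ^ 2 + b ^ 2 ∧ (b + 1 < a → a' ^ 2 + b' ^ 2 < a ^ 2 + b ^ 2) := by
  have hsq : 2 * ((a' : ℤ) ^ 2 + b' ^ 2) + ((a : ℤ) - b) ^ 2 =
      2 * ((a : ℤ) ^ 2 + b ^ 2) + ((a' : ℤ) - b') ^ 2 := by
    have : (a' : ℤ) + b' = a + b := by exact_mod_cast hs
    linear_combination ((a' : ℤ) + b' + a + b) * this
  have hle : |(a' : ℤ) - b'| ≤ |(a : ℤ) - b| := by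
    rcases abs_cases ((a' : ℤ) - b') with h1 | h1 <;>
      rcases abs_cases ((a : ℤ) - b) with h2 | h2 <;> omega
  refine ⟨?_, fun hab => ?_⟩
  · have := sq_le_sq.2 hle
    zify
    linarith
  · have : ((a' : ℤ) - b') ^ 2 < ((a : ℤ) - b) ^ 2 := by
      rw [sq_lt_sq, abs_of_pos (a := (a : ℤ) - b) (by omega)]
      omega
    zify
    linarith

section Equitable
variable [DecidableEq V] {k : ℕ}

def colorClass [Fintype E] (c : E → Fin k) (i : Fin k) : Finset E := univ.filter fun e => c e = i

@[simp] lemma mem_colorClass [Fintype E] {c : E → Fin k} {i : Fin k} {e : E} :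
    e ∈ colorClass c i ↔ c e = i := by
  simp [colorClass]

lemma disjoint_colorClass [Fintype E] (c : E → Fin k) {i j : Fin k} (hij : i ≠ j) :
    Disjoint (colorClass c i) (colorClass c j) :=
  Finset.disjoint_left.2 fun _ hi hj => hij ((mem_colorClass.1 hi).symm.trans (mem_colorClass.1 hj))

lemma sum_mdeg_colorClass [Fintype E] (g : E → V × V) (c : E → Fin k) (v : V) :
    ∑ i, mdeg g (colorClass c i) v = mdeg g univ v := by
  simp only [mdeg_eq_sum, colorClass]
  exact Finset.sum_fiberwise univ c _

def recolor [DecidableEq E] (c : E → Fin k) (i j : Fin k) (S₁ : Finset E) : E → Fin k :=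
  fun e => if c e = i ∨ c e = j then (if e ∈ S₁ then i else j) else c e

section Recolor
variable [Fintype E] [DecidableEq E] {c : E → Fin k} {i j : Fin k} {S₁ : Finset E}

lemma colorClass_recolor_left (hij : i ≠ j) (hS₁ : S₁ ⊆ colorClass c i ∪ colorClass c j) :
    colorClass (recolor c i j S₁) i = S₁ := by
  ext e
  have := @hS₁ e
  simp only [mem_colorClass, recolor, Finset.mem_union] at this ⊢
  split_ifs with h h₁ <;> simp_all [Ne.symm hij]

lemma colorClass_recolor_right (hij : i ≠ j) (hS₁ : S₁ ⊆ colorClass c i ∪ colorClass c j) :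
    colorClass (recolor c i j S₁) j = (colorClass c i ∪ colorClass c j) \ S₁ := by
  ext e
  have := @hS₁ e
  simp only [mem_colorClass, recolor, Finset.mem_union, Finset.mem_sdiff] at this ⊢
  split_ifs with h h₁ <;> simp_all

lemma colorClass_recolor_of_ne {l : Fin k} (hi : l ≠ i) (hj : l ≠ j) :
    colorClass (recolor c i j S₁) l = colorClass c l := by
  ext e
  simp only [mem_colorClass, recolor]
  by_cases h : c e = i ∨ c e = j
  · have hce : c e ≠ l := by rintro rfl; tauto
    rw [if_pos h]
    split_ifs
    exacts [iff_of_false (Ne.symm hi) hce, iff_of_false (Ne.symm hj) hce]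
  · rw [if_neg h]

end Recolor

def IsEquitable [Fintype E] (g : E → V × V) (c : E → Fin k) : Prop :=
  ∀ i j, (colorClass c i).card ≤ (colorClass c j).card + 1 ∧
    ∀ v, mdeg g (colorClass c i) v ≤ mdeg g (colorClass c j) v + 1

def energy [Fintype V] (g : E → V × V) (T : Finset E) : ℕ :=
  T.card ^ 2 + ∑ v, mdeg g T v ^ 2

lemma energy_add_energy_lt [Fintype V] [DecidableEq E] {g : E → V × V} {A B S₁ : Finset E}
    (hAB : Disjoint A B) (hS₁ : S₁ ⊆ A ∪ B)
    (hdeg : ∀ v, |(mdeg g S₁ v : ℤ) - mdeg g ((A ∪ B) \ S₁) v| ≤ 1)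
    (hcard : |(S₁.card : ℤ) - ((A ∪ B) \ S₁).card| ≤ 1)
    (hunbal : B.card + 1 < A.card ∨ ∃ v, mdeg g B v + 1 < mdeg g A v) :
    energy g S₁ + energy g ((A ∪ B) \ S₁) < energy g A + energy g B := by
  have hcards := sq_add_sq_le_of_abs_sub_le_one (a := A.card) (b := B.card)
    (by rw [add_comm, Finset.card_sdiff_add_card_eq_card hS₁, Finset.card_union_of_disjoint hAB])
    hcard
  have hdegs : ∀ v, _ := fun v => sq_add_sq_le_of_abs_sub_le_one (a := mdeg g A v)
    (b := mdeg g B v) (by rw [add_comm, mdeg_sdiff_add g hS₁, mdeg_union g hAB]) (hdeg v)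
  simp only [energy]
  rw [add_add_add_comm, ← Finset.sum_add_distrib, add_add_add_comm (_ ^ 2),
    ← Finset.sum_add_distrib]
  rcases hunbal with h | ⟨v, h⟩
  · exact add_lt_add_of_lt_of_le (hcards.2 h) (Finset.sum_le_sum fun v _ => (hdegs v).1)
  · exact add_lt_add_of_le_of_lt hcards.1
      (Finset.sum_lt_sum (fun v _ => (hdegs v).1) ⟨v, Finset.mem_univ v, (hdegs v).2 h⟩)

lemma exists_energy_lt_of_not_isEquitable [Fintype V] [Fintype E] [DecidableEq E]
    (g : E → V × V) (β : V → Bool) (hβ : ∀ e, β (g e).1 = false ∧ β (g e).2 = true)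
    {c : E → Fin k} (hc : ¬ IsEquitable g c) :
    ∃ c' : E → Fin k, ∑ i, energy g (colorClass c' i) < ∑ i, energy g (colorClass c i) := by
  simp only [IsEquitable, not_forall, not_and_or, not_le] at hc
  obtain ⟨i, j, hij⟩ := hc
  have hne : i ≠ j := by rintro rfl; rcases hij with h | ⟨v, h⟩ <;> omega
  obtain ⟨S₁, hS₁, hdeg, hcard⟩ := exists_balanced_split g β hβ (colorClass c i ∪ colorClass c j)
  refine ⟨recolor c i j S₁, ?_⟩
  rw [← Finset.sum_add_sum_compl {i, j}, ← Finset.sum_add_sum_compl {i, j},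
    Finset.sum_pair hne, Finset.sum_pair hne, colorClass_recolor_left hne hS₁,
    colorClass_recolor_right hne hS₁, Finset.sum_congr rfl fun l hl => by
      simp only [Finset.mem_compl, Finset.mem_insert, Finset.mem_singleton, not_or] at hl
      rw [colorClass_recolor_of_ne hl.1 hl.2]]
  exact Nat.add_lt_add_right
    (energy_add_energy_lt (disjoint_colorClass c hne) hS₁ hdeg hcard hij) _

theorem exists_isEquitable [Fintype V] [Fintype E] [DecidableEq E] (g : E → V × V)
    (β : V → Bool) (hβ : ∀ e, β (g e).1 = false ∧ β (g e).2 = true) (hk : 0 < k) :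
    ∃ c : E → Fin k, IsEquitable g c := by
  obtain ⟨c, -, hmin⟩ := (measure fun c : E → Fin k => ∑ i, energy g (colorClass c i)).wf.has_min
    Set.univ ⟨fun _ => ⟨0, hk⟩, trivial⟩
  by_contra! h
  obtain ⟨c', hc'⟩ := exists_energy_lt_of_not_isEquitable g β hβ (h c)
  exact hmin c' trivial hc'

lemma IsEquitable.abs_mul_card_sub_lt [Fintype E] {g : E → V × V} {c : E → Fin k}
    (hc : IsEquitable g c) (i : Fin k) :
    |(k * (colorClass c i).card : ℤ) - Fintype.card E| < k := by
  have hsum : ∑ j, ((colorClass c j).card : ℤ) = Fintype.card E := by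
    exact_mod_cast (Finset.card_eq_sum_card_fiberwise fun e _ => Finset.mem_univ (c e)).symm
  simpa [hsum] using
    abs_card_mul_sub_sum_lt (fun i => (colorClass c i).card) (fun i j => (hc i j).1) i

lemma IsEquitable.abs_mul_mdeg_sub_lt [Fintype E] {g : E → V × V} {c : E → Fin k}
    (hc : IsEquitable g c) (i : Fin k) (v : V) :
    |(k * mdeg g (colorClass c i) v : ℤ) - mdeg g univ v| < k := by
  simpa [← sum_mdeg_colorClass g c v] using
    abs_card_mul_sub_sum_lt (fun i => mdeg g (colorClass c i) v) (fun i j => (hc i j).2 v) i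

end Equitable

lemma abs_sub_div_lt_one_s7 {k a m : ℕ} (hk : 0 < k) (h : |(k * a : ℤ) - m| < k) :
    |(a : ℝ) - m / k| < 1 := by
  have hk' : (0 : ℝ) < k := by exact_mod_cast hk
  rw [show (a : ℝ) - m / k = (k * a - m) / k by field_simp, abs_div, abs_of_pos hk',
    div_lt_one hk']
  exact_mod_cast h

lemma div_le_and_le_add_pred_div {k a x : ℕ} (hk : 0 < k) (h : |(k * x : ℤ) - a| < k) :
    a / k ≤ x ∧ x ≤ (a + (k - 1)) / k := by
  rw [abs_lt] at h
  rw [Nat.div_le_iff_le_mul_add_pred hk, Nat.le_div_iff_mul_le hk, mul_comm x]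
  constructor <;> zify [hk] <;> omega

/-- The two halves of `d = a + b` are `⌊d/2⌋` and `⌈d/2⌉`, and `⌊⌊d/2⌋/k⌋ = ⌊d/2k⌋`,
`⌈⌈d/2⌉/k⌉ = ⌈d/2k⌉`, `⌈⌊d/2⌋/k⌉ = ⌈(d-1)/2k⌉` (the truncated `d - 1` is harmless at `d = 0`). -/
lemma floor_add_floor_le_and_le_ceil_add_ceil {k a b x y : ℕ} (hk : 0 < k) (hab : |(a : ℤ) - b| ≤ 1)
    (hx : |(k * x : ℤ) - a| < k) (hy : |(k * y : ℤ) - b| < k) :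
    (a + b) / (2 * k) + (a + b + 1) / (2 * k) ≤ x + y ∧
      x + y ≤ (a + b + (2 * k - 1)) / (2 * k) + ((a + b - 1) + (2 * k - 1)) / (2 * k) := by
  obtain ⟨hx₁, hx₂⟩ := div_le_and_le_add_pred_div hk hx
  obtain ⟨hy₁, hy₂⟩ := div_le_and_le_add_pred_div hk hy
  simp only [← Nat.div_div_eq_div_mul]
  rw [show (a + b + (2 * k - 1)) / 2 = (a + b + 1) / 2 + (k - 1) by omega,
    show (a + b - 1 + (2 * k - 1)) / 2 = (a + b) / 2 + (k - 1) by omega]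
  rw [abs_le] at hab
  rcases (show (a = (a + b) / 2 ∧ b = (a + b + 1) / 2) ∨ (a = (a + b + 1) / 2 ∧ b = (a + b) / 2)
    by omega) with ⟨ha, hb⟩ | ⟨ha, hb⟩ <;> rw [← ha, ← hb] <;> omega

section Split
variable [DecidableEq V]

def splitGraph (f : E → V × V) : E → (V × Bool) × (V × Bool) :=
  fun e => (((f e).1, false), ((f e).2, true))

lemma mdeg_splitGraph_false (f : E → V × V) (S : Finset E) (v : V) :
    mdeg (splitGraph f) S (v, false) = (S.filter fun e => (f e).1 = v).card := by
  simp [mdeg, splitGraph]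

lemma mdeg_splitGraph_true (f : E → V × V) (S : Finset E) (v : V) :
    mdeg (splitGraph f) S (v, true) = (S.filter fun e => (f e).2 = v).card := by
  simp [mdeg, splitGraph]

lemma mdeg_eq_mdeg_splitGraph (f : E → V × V) (S : Finset E) (v : V) :
    mdeg f S v = mdeg (splitGraph f) S (v, false) + mdeg (splitGraph f) S (v, true) := by
  rw [mdeg_splitGraph_false, mdeg_splitGraph_true, mdeg]

lemma abs_mdeg_splitGraph_sub_le {g f : E → V × V} {S : Finset E}
    (hf : ∀ v, |netInflow f S (Pi.single v 1)| ≤ (mdeg g S v % 2 : ℕ)) (v : V) :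
    |(mdeg (splitGraph f) S (v, false) : ℤ) - mdeg (splitGraph f) S (v, true)| ≤ 1 := by
  have h := hf v
  rw [netInflow_single, ← mdeg_splitGraph_false, ← mdeg_splitGraph_true, abs_sub_comm] at h
  exact h.trans (by omega)

end Split

/-- Anstee's theorem: every multigraph has an edge-decomposition into `k` factors with
equitable edge counts and near-equitable degrees. -/
theorem anstee_factorization [Fintype V] [Fintype E] [DecidableEq V]
    (ends : E → V × V) (k : ℕ) (hk : 0 < k) :
    ∃ c : E → Fin k,
      (∀ i : Fin k,
        |(((univ.filter fun e : E => c e = i).card : ℝ)) -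
          (Fintype.card E : ℝ) / (k : ℝ)| < 1) ∧
      (∀ v : V, ∀ i : Fin k,
        mdeg ends univ v / (2 * k) + (mdeg ends univ v + 1) / (2 * k) ≤
            mdeg ends (univ.filter fun e => c e = i) v ∧
        mdeg ends (univ.filter fun e => c e = i) v ≤
            (mdeg ends univ v + (2 * k - 1)) / (2 * k) +
            ((mdeg ends univ v - 1) + (2 * k - 1)) / (2 * k)) := by
  classical
  obtain ⟨f, hf, hbal, -⟩ := exists_balanced_orientation ends 0 (by simp) univ
  obtain ⟨c, hc⟩ := exists_isEquitable (splitGraph f) Prod.snd (fun _ => ⟨rfl, rfl⟩) hk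
  refine ⟨c, fun i => abs_sub_div_lt_one_s7 hk (hc.abs_mul_card_sub_lt i), fun v i => ?_⟩
  rw [← hf.mdeg_eq, ← hf.mdeg_eq, mdeg_eq_mdeg_splitGraph f univ,
    mdeg_eq_mdeg_splitGraph f (univ.filter _)]
  exact floor_add_floor_le_and_le_ceil_add_ceil hk (abs_mdeg_splitGraph_sub_le hbal v)
    (hc.abs_mul_mdeg_sub_lt i _) (hc.abs_mul_mdeg_sub_lt i _)
end
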